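/- (Local energy conservation law of the 2D nonlinear Schrödinger equation) Let α ∈ ℝ and let V : ℝ × ℝ × ℝ → ℝ be continuously differentiable in its first argument, with V′ denoting that partial derivative. Let ψ : ℝ × ℝ × ℝ → ℂ, (x,y,t) ↦ ψ(x,y,t), be three times continuously differentiable and satisfy i ψ_t + α(ψ_xx + ψ_yy) + V′(|ψ|², x, y) ψ = 0. Write ψ = p + i q with p, q real and set v = ∂_x p, w = ∂_x q, a = ∂_y p, b = ∂_y q, E = (1/2) V(p² + q², x, y) + (α/2)(p ∂_x v + q ∂_x w + p ∂_y a + q ∂_y b), F = (α/2)(−p ∂_t v − q ∂_t w + v ∂_t p + w ∂_t q), G = (α/2)(−p ∂_t a − q ∂_t b + a ∂_t p + b ∂_t q). Then ∂_t E + ∂_x F + ∂_y G = 0 everywhere. -/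

import Mathlib

/-!
Write the equation as the real system `-q_t + αΔp + V'p = 0`, `p_t + αΔq + V'q = 0`.
The product rule and the symmetry of mixed partials of the `C³` function `ψ` give
`E_t = V'(p p_t + q q_t) + (α/2)(p_t Δp + p (Δp)_t + q_t Δq + q (Δq)_t)` and
`F_x + G_y = (α/2)(p_t Δp - p (Δp)_t + q_t Δq - q (Δq)_t)`, so
`E_t + F_x + G_y = p_t (αΔp + V'p) + q_t (αΔq + V'q) = p_t q_t - q_t p_t = 0`.
-/

noncomputable section

section PartialDerivatives

variable {E F : Type*} [NormedAddCommGroup E] [NormedSpace ℝ E]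
  [NormedAddCommGroup F] [NormedSpace ℝ F]

def uncurry3 (f : ℝ → ℝ → ℝ → E) : ℝ × ℝ × ℝ → E := fun z => f z.1 z.2.1 z.2.2

def partialX (f : ℝ → ℝ → ℝ → E) : ℝ → ℝ → ℝ → E := fun x y t => deriv (fun ξ => f ξ y t) x

def partialY (f : ℝ → ℝ → ℝ → E) : ℝ → ℝ → ℝ → E := fun x y t => deriv (fun η => f x η t) y

def partialT (f : ℝ → ℝ → ℝ → E) : ℝ → ℝ → ℝ → E := fun x y t => deriv (fun τ => f x y τ) t

variable {f : ℝ → ℝ → ℝ → E} {x y t : ℝ}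

theorem hasDerivAt_fderiv_x (hf : DifferentiableAt ℝ (uncurry3 f) (x, y, t)) :
    HasDerivAt (fun ξ => f ξ y t) (fderiv ℝ (uncurry3 f) (x, y, t) (1, 0, 0)) x :=
  hf.hasFDerivAt.comp_hasDerivAt (l := uncurry3 f) x
    ((hasDerivAt_id' x).prodMk ((hasDerivAt_const x y).prodMk (hasDerivAt_const x t)))

theorem hasDerivAt_fderiv_y (hf : DifferentiableAt ℝ (uncurry3 f) (x, y, t)) :
    HasDerivAt (fun η => f x η t) (fderiv ℝ (uncurry3 f) (x, y, t) (0, 1, 0)) y :=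
  hf.hasFDerivAt.comp_hasDerivAt (l := uncurry3 f) y
    ((hasDerivAt_const y x).prodMk ((hasDerivAt_id' y).prodMk (hasDerivAt_const y t)))

theorem hasDerivAt_fderiv_t (hf : DifferentiableAt ℝ (uncurry3 f) (x, y, t)) :
    HasDerivAt (fun τ => f x y τ) (fderiv ℝ (uncurry3 f) (x, y, t) (0, 0, 1)) t :=
  hf.hasFDerivAt.comp_hasDerivAt (l := uncurry3 f) t
    ((hasDerivAt_const t x).prodMk ((hasDerivAt_const t y).prodMk (hasDerivAt_id' t)))

theorem hasDerivAt_partialX (hf : DifferentiableAt ℝ (uncurry3 f) (x, y, t)) :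
    HasDerivAt (fun ξ => f ξ y t) (partialX f x y t) x :=
  (hasDerivAt_fderiv_x hf).differentiableAt.hasDerivAt

theorem hasDerivAt_partialY (hf : DifferentiableAt ℝ (uncurry3 f) (x, y, t)) :
    HasDerivAt (fun η => f x η t) (partialY f x y t) y :=
  (hasDerivAt_fderiv_y hf).differentiableAt.hasDerivAt

theorem hasDerivAt_partialT (hf : DifferentiableAt ℝ (uncurry3 f) (x, y, t)) :
    HasDerivAt (fun τ => f x y τ) (partialT f x y t) t :=
  (hasDerivAt_fderiv_t hf).differentiableAt.hasDerivAt

theorem uncurry3_partialX (hf : Differentiable ℝ (uncurry3 f)) :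
    uncurry3 (partialX f) = fun z => fderiv ℝ (uncurry3 f) z (1, 0, 0) :=
  funext fun _ => (hasDerivAt_fderiv_x (hf _)).deriv

theorem uncurry3_partialY (hf : Differentiable ℝ (uncurry3 f)) :
    uncurry3 (partialY f) = fun z => fderiv ℝ (uncurry3 f) z (0, 1, 0) :=
  funext fun _ => (hasDerivAt_fderiv_y (hf _)).deriv

theorem uncurry3_partialT (hf : Differentiable ℝ (uncurry3 f)) :
    uncurry3 (partialT f) = fun z => fderiv ℝ (uncurry3 f) z (0, 0, 1) :=
  funext fun _ => (hasDerivAt_fderiv_t (hf _)).deriv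

variable {m n : WithTop ℕ∞}

theorem ContDiff.uncurry3_partialX (hf : ContDiff ℝ n (uncurry3 f)) (hmn : m + 1 ≤ n) :
    ContDiff ℝ m (uncurry3 (partialX f)) := by
  rw [_root_.uncurry3_partialX (hf.differentiable (one_pos.trans_le (le_add_self.trans hmn)).ne')]
  exact (hf.fderiv_right hmn).clm_apply contDiff_const

theorem ContDiff.uncurry3_partialY (hf : ContDiff ℝ n (uncurry3 f)) (hmn : m + 1 ≤ n) :
    ContDiff ℝ m (uncurry3 (partialY f)) := by
  rw [_root_.uncurry3_partialY (hf.differentiable (one_pos.trans_le (le_add_self.trans hmn)).ne')]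
  exact (hf.fderiv_right hmn).clm_apply contDiff_const

theorem ContDiff.uncurry3_partialT (hf : ContDiff ℝ n (uncurry3 f)) (hmn : m + 1 ≤ n) :
    ContDiff ℝ m (uncurry3 (partialT f)) := by
  rw [_root_.uncurry3_partialT (hf.differentiable (one_pos.trans_le (le_add_self.trans hmn)).ne')]
  exact (hf.fderiv_right hmn).clm_apply contDiff_const

theorem fderiv_fderiv_apply_comm {G : Type*} [NormedAddCommGroup G] [NormedSpace ℝ G]
    {U : G → E} (hU : ContDiff ℝ 2 U) (z u v : G) :
    fderiv ℝ (fun w => fderiv ℝ U w v) z u = fderiv ℝ (fun w => fderiv ℝ U w u) z v := by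
  have hd : DifferentiableAt ℝ (fderiv ℝ U) z :=
    (hU.fderiv_right (m := 1) le_rfl).differentiable one_ne_zero z
  rw [fderiv_clm_apply hd (differentiableAt_const v), fderiv_clm_apply hd (differentiableAt_const u)]
  simpa using hU.contDiffAt.isSymmSndFDerivAt (by simp) u v

theorem partialX_partialT_comm (hf : ContDiff ℝ 2 (uncurry3 f)) :
    partialX (partialT f) = partialT (partialX f) := by
  have hd : Differentiable ℝ (uncurry3 f) := hf.differentiable two_ne_zero
  have hdT := (hf.uncurry3_partialT (m := 1) le_rfl).differentiable one_ne_zero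
  have hdX := (hf.uncurry3_partialX (m := 1) le_rfl).differentiable one_ne_zero
  funext x y t
  change uncurry3 (partialX (partialT f)) (x, y, t) = uncurry3 (partialT (partialX f)) (x, y, t)
  rw [uncurry3_partialX hdT, uncurry3_partialT hd, uncurry3_partialT hdX, uncurry3_partialX hd]
  exact fderiv_fderiv_apply_comm hf _ _ _

theorem partialY_partialT_comm (hf : ContDiff ℝ 2 (uncurry3 f)) :
    partialY (partialT f) = partialT (partialY f) := by
  have hd : Differentiable ℝ (uncurry3 f) := hf.differentiable two_ne_zero
  have hdT := (hf.uncurry3_partialT (m := 1) le_rfl).differentiable one_ne_zero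
  have hdY := (hf.uncurry3_partialY (m := 1) le_rfl).differentiable one_ne_zero
  funext x y t
  change uncurry3 (partialY (partialT f)) (x, y, t) = uncurry3 (partialT (partialY f)) (x, y, t)
  rw [uncurry3_partialY hdT, uncurry3_partialT hd, uncurry3_partialT hdY, uncurry3_partialY hd]
  exact fderiv_fderiv_apply_comm hf _ _ _

theorem partialX_clm_comp (L : E →L[ℝ] F) (hf : Differentiable ℝ (uncurry3 f)) :
    partialX (fun x y t => L (f x y t)) = fun x y t => L (partialX f x y t) :=
  funext fun _ => funext fun _ => funext fun _ =>
    (L.hasFDerivAt.comp_hasDerivAt _ (hasDerivAt_partialX (hf _))).deriv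

theorem partialY_clm_comp (L : E →L[ℝ] F) (hf : Differentiable ℝ (uncurry3 f)) :
    partialY (fun x y t => L (f x y t)) = fun x y t => L (partialY f x y t) :=
  funext fun _ => funext fun _ => funext fun _ =>
    (L.hasFDerivAt.comp_hasDerivAt _ (hasDerivAt_partialY (hf _))).deriv

theorem partialT_clm_comp (L : E →L[ℝ] F) (hf : Differentiable ℝ (uncurry3 f)) :
    partialT (fun x y t => L (f x y t)) = fun x y t => L (partialT f x y t) :=
  funext fun _ => funext fun _ => funext fun _ =>
    (L.hasFDerivAt.comp_hasDerivAt _ (hasDerivAt_partialT (hf _))).deriv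

end PartialDerivatives

def nlsEnergyDensity (α : ℝ) (V p q : ℝ → ℝ → ℝ → ℝ) : ℝ → ℝ → ℝ → ℝ := fun x y t =>
  1/2 * V (p x y t ^ 2 + q x y t ^ 2) x y
    + α/2 * (p x y t * partialX (partialX p) x y t + q x y t * partialX (partialX q) x y t
      + p x y t * partialY (partialY p) x y t + q x y t * partialY (partialY q) x y t)

-- `D` is `partialX` or `partialY`, giving the fluxes `F` and `G`.
def nlsFlux (α : ℝ) (D : (ℝ → ℝ → ℝ → ℝ) → ℝ → ℝ → ℝ → ℝ) (p q : ℝ → ℝ → ℝ → ℝ) :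
    ℝ → ℝ → ℝ → ℝ := fun x y t =>
  α/2 * (-(p x y t) * partialT (D p) x y t - q x y t * partialT (D q) x y t
    + D p x y t * partialT p x y t + D q x y t * partialT q x y t)

section EnergyLaw

variable {α : ℝ} {V V' p q : ℝ → ℝ → ℝ → ℝ} {x y t : ℝ}

theorem partialT_nlsEnergyDensity (hp : ContDiff ℝ 3 (uncurry3 p)) (hq : ContDiff ℝ 3 (uncurry3 q))
    (hV : HasDerivAt (fun ζ => V ζ x y) (V' (p x y t ^ 2 + q x y t ^ 2) x y)
      (p x y t ^ 2 + q x y t ^ 2)) :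
    partialT (nlsEnergyDensity α V p q) x y t
      = V' (p x y t ^ 2 + q x y t ^ 2) x y * (p x y t * partialT p x y t + q x y t * partialT q x y t)
        + α/2 * (partialT p x y t * (partialX (partialX p) x y t + partialY (partialY p) x y t)
          + partialT q x y t * (partialX (partialX q) x y t + partialY (partialY q) x y t)
          + p x y t * (partialT (partialX (partialX p)) x y t + partialT (partialY (partialY p)) x y t)
          + q x y t * (partialT (partialX (partialX q)) x y t
            + partialT (partialY (partialY q)) x y t)) := by
  have hpXX := (hp.uncurry3_partialX (m := 2) (by norm_num)).uncurry3_partialX (m := 1) le_rfl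
  have hqXX := (hq.uncurry3_partialX (m := 2) (by norm_num)).uncurry3_partialX (m := 1) le_rfl
  have hpYY := (hp.uncurry3_partialY (m := 2) (by norm_num)).uncurry3_partialY (m := 1) le_rfl
  have hqYY := (hq.uncurry3_partialY (m := 2) (by norm_num)).uncurry3_partialY (m := 1) le_rfl
  have hpt := hasDerivAt_partialT (hp.differentiable (by norm_num) (x, y, t))
  have hqt := hasDerivAt_partialT (hq.differentiable (by norm_num) (x, y, t))
  have hVt := hV.comp t (h := fun τ => p x y τ ^ 2 + q x y τ ^ 2) ((hpt.pow 2).add (hqt.pow 2))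
  have hpXXt := hasDerivAt_partialT (hpXX.differentiable one_ne_zero (x, y, t))
  have hqXXt := hasDerivAt_partialT (hqXX.differentiable one_ne_zero (x, y, t))
  have hpYYt := hasDerivAt_partialT (hpYY.differentiable one_ne_zero (x, y, t))
  have hqYYt := hasDerivAt_partialT (hqYY.differentiable one_ne_zero (x, y, t))
  have key := (hVt.const_mul (1/2)).add
    (((((hpt.mul hpXXt).add (hqt.mul hqXXt)).add (hpt.mul hpYYt)).add (hqt.mul hqYYt)).const_mul (α/2))
  exact key.deriv.trans (by push_cast; ring)

theorem partialX_nlsFlux (hp : ContDiff ℝ 3 (uncurry3 p)) (hq : ContDiff ℝ 3 (uncurry3 q)) :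
    partialX (nlsFlux α partialX p q) x y t
      = α/2 * (partialT p x y t * partialX (partialX p) x y t
        - p x y t * partialT (partialX (partialX p)) x y t
        + partialT q x y t * partialX (partialX q) x y t
        - q x y t * partialT (partialX (partialX q)) x y t) := by
  have hpX := hp.uncurry3_partialX (m := 2) (by norm_num)
  have hqX := hq.uncurry3_partialX (m := 2) (by norm_num)
  have hpXT := hpX.uncurry3_partialT (m := 1) (by norm_num)
  have hqXT := hqX.uncurry3_partialT (m := 1) (by norm_num)
  have hpT := hp.uncurry3_partialT (m := 1) (by norm_num)
  have hqT := hq.uncurry3_partialT (m := 1) (by norm_num)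
  have hpx := hasDerivAt_partialX (hp.differentiable (by norm_num) (x, y, t))
  have hqx := hasDerivAt_partialX (hq.differentiable (by norm_num) (x, y, t))
  have hpXx := hasDerivAt_partialX (hpX.differentiable (by norm_num) (x, y, t))
  have hqXx := hasDerivAt_partialX (hqX.differentiable (by norm_num) (x, y, t))
  have hpXTx := hasDerivAt_partialX (hpXT.differentiable one_ne_zero (x, y, t))
  have hqXTx := hasDerivAt_partialX (hqXT.differentiable one_ne_zero (x, y, t))
  have hpTx := hasDerivAt_partialX (hpT.differentiable one_ne_zero (x, y, t))
  have hqTx := hasDerivAt_partialX (hqT.differentiable one_ne_zero (x, y, t))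
  have key := ((((hpx.neg.mul hpXTx).sub (hqx.mul hqXTx)).add (hpXx.mul hpTx)).add
    (hqXx.mul hqTx)).const_mul (α/2)
  rw [partialX_partialT_comm (hp.of_le (by norm_num)), partialX_partialT_comm hpX,
    partialX_partialT_comm (hq.of_le (by norm_num)), partialX_partialT_comm hqX] at key
  exact key.deriv.trans (by simp only [Pi.neg_apply]; ring)

theorem partialY_nlsFlux (hp : ContDiff ℝ 3 (uncurry3 p)) (hq : ContDiff ℝ 3 (uncurry3 q)) :
    partialY (nlsFlux α partialY p q) x y t
      = α/2 * (partialT p x y t * partialY (partialY p) x y t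
        - p x y t * partialT (partialY (partialY p)) x y t
        + partialT q x y t * partialY (partialY q) x y t
        - q x y t * partialT (partialY (partialY q)) x y t) := by
  have hpY := hp.uncurry3_partialY (m := 2) (by norm_num)
  have hqY := hq.uncurry3_partialY (m := 2) (by norm_num)
  have hpYT := hpY.uncurry3_partialT (m := 1) (by norm_num)
  have hqYT := hqY.uncurry3_partialT (m := 1) (by norm_num)
  have hpT := hp.uncurry3_partialT (m := 1) (by norm_num)
  have hqT := hq.uncurry3_partialT (m := 1) (by norm_num)
  have hpy := hasDerivAt_partialY (hp.differentiable (by norm_num) (x, y, t))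
  have hqy := hasDerivAt_partialY (hq.differentiable (by norm_num) (x, y, t))
  have hpYy := hasDerivAt_partialY (hpY.differentiable (by norm_num) (x, y, t))
  have hqYy := hasDerivAt_partialY (hqY.differentiable (by norm_num) (x, y, t))
  have hpYTy := hasDerivAt_partialY (hpYT.differentiable one_ne_zero (x, y, t))
  have hqYTy := hasDerivAt_partialY (hqYT.differentiable one_ne_zero (x, y, t))
  have hpTy := hasDerivAt_partialY (hpT.differentiable one_ne_zero (x, y, t))
  have hqTy := hasDerivAt_partialY (hqT.differentiable one_ne_zero (x, y, t))
  have key := ((((hpy.neg.mul hpYTy).sub (hqy.mul hqYTy)).add (hpYy.mul hpTy)).add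
    (hqYy.mul hqTy)).const_mul (α/2)
  rw [partialY_partialT_comm (hp.of_le (by norm_num)), partialY_partialT_comm hpY,
    partialY_partialT_comm (hq.of_le (by norm_num)), partialY_partialT_comm hqY] at key
  exact key.deriv.trans (by simp only [Pi.neg_apply]; ring)

theorem nls_local_energy_conservation (hp : ContDiff ℝ 3 (uncurry3 p))
    (hq : ContDiff ℝ 3 (uncurry3 q))
    (hV : HasDerivAt (fun ζ => V ζ x y) (V' (p x y t ^ 2 + q x y t ^ 2) x y)
      (p x y t ^ 2 + q x y t ^ 2))
    (hre : -partialT q x y t + α * (partialX (partialX p) x y t + partialY (partialY p) x y t)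
      + V' (p x y t ^ 2 + q x y t ^ 2) x y * p x y t = 0)
    (him : partialT p x y t + α * (partialX (partialX q) x y t + partialY (partialY q) x y t)
      + V' (p x y t ^ 2 + q x y t ^ 2) x y * q x y t = 0) :
    partialT (nlsEnergyDensity α V p q) x y t + partialX (nlsFlux α partialX p q) x y t
      + partialY (nlsFlux α partialY p q) x y t = 0 := by
  rw [partialT_nlsEnergyDensity hp hq hV, partialX_nlsFlux hp hq, partialY_nlsFlux hp hq]
  linear_combination partialT p x y t * hre + partialT q x y t * him

theorem nls_re_im {ψ : ℝ → ℝ → ℝ → ℂ} (hψ : ContDiff ℝ 2 (uncurry3 ψ))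
    (hp : ∀ x y t, p x y t = (ψ x y t).re) (hq : ∀ x y t, q x y t = (ψ x y t).im)
    (hpde : Complex.I * partialT ψ x y t
      + (α : ℂ) * (partialX (partialX ψ) x y t + partialY (partialY ψ) x y t)
      + (V' (Complex.normSq (ψ x y t)) x y : ℂ) * ψ x y t = 0) :
    (-partialT q x y t + α * (partialX (partialX p) x y t + partialY (partialY p) x y t)
      + V' (p x y t ^ 2 + q x y t ^ 2) x y * p x y t = 0) ∧
    (partialT p x y t + α * (partialX (partialX q) x y t + partialY (partialY q) x y t)
      + V' (p x y t ^ 2 + q x y t ^ 2) x y * q x y t = 0) := by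
  obtain rfl : p = fun x y t => Complex.reCLM (ψ x y t) := funext₃ hp
  obtain rfl : q = fun x y t => Complex.imCLM (ψ x y t) := funext₃ hq
  have hd : Differentiable ℝ (uncurry3 ψ) := hψ.differentiable two_ne_zero
  have hdX := (hψ.uncurry3_partialX (m := 1) le_rfl).differentiable one_ne_zero
  have hdY := (hψ.uncurry3_partialY (m := 1) le_rfl).differentiable one_ne_zero
  simp only [partialT_clm_comp _ hd, partialX_clm_comp _ hd, partialY_clm_comp _ hd,
    partialX_clm_comp _ hdX, partialY_clm_comp _ hdY]
  rw [Complex.normSq_apply] at hpde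
  constructor
  · simpa [sq] using congrArg Complex.re hpde
  · simpa [sq] using congrArg Complex.im hpde

end EnergyLaw

end

theorem stmt19_general (α : ℝ) (V V' : ℝ → ℝ → ℝ → ℝ)
    (hV : ∀ (ξ x y : ℝ), HasDerivAt (fun ζ => V ζ x y) (V' ξ x y) ξ)
    (ψ : ℝ → ℝ → ℝ → ℂ)
    (hpde : ∀ x y t,
      Complex.I * deriv (fun τ => ψ x y τ) t
        + (α : ℂ) * (deriv (fun ξ => deriv (fun ξ' => ψ ξ' y t) ξ) x
          + deriv (fun η => deriv (fun η' => ψ x η' t) η) y)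
        + (V' (Complex.normSq (ψ x y t)) x y : ℂ) * ψ x y t = 0)
    (p q v w a b : ℝ → ℝ → ℝ → ℝ)
    (hp : ∀ x y t, p x y t = (ψ x y t).re) (hq : ∀ x y t, q x y t = (ψ x y t).im)
    (hv : ∀ x y t, v x y t = deriv (fun ξ => p ξ y t) x)
    (hw : ∀ x y t, w x y t = deriv (fun ξ => q ξ y t) x)
    (ha : ∀ x y t, a x y t = deriv (fun η => p x η t) y)
    (hb : ∀ x y t, b x y t = deriv (fun η => q x η t) y)
    (hψ : ContDiff ℝ 3 fun pt : ℝ × ℝ × ℝ => ψ pt.1 pt.2.1 pt.2.2)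
    (E F G : ℝ → ℝ → ℝ → ℝ)
    (hE : ∀ x y t, E x y t = (1/2) * V (p x y t ^ 2 + q x y t ^ 2) x y
        + (α/2) * (p x y t * deriv (fun ξ => v ξ y t) x
          + q x y t * deriv (fun ξ => w ξ y t) x
          + p x y t * deriv (fun η => a x η t) y
          + q x y t * deriv (fun η => b x η t) y))
    (hF : ∀ x y t, F x y t = (α/2) * (-(p x y t) * deriv (fun τ => v x y τ) t
        - q x y t * deriv (fun τ => w x y τ) t
        + v x y t * deriv (fun τ => p x y τ) t
        + w x y t * deriv (fun τ => q x y τ) t))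
    (hG : ∀ x y t, G x y t = (α/2) * (-(p x y t) * deriv (fun τ => a x y τ) t
        - q x y t * deriv (fun τ => b x y τ) t
        + a x y t * deriv (fun τ => p x y τ) t
        + b x y t * deriv (fun τ => q x y τ) t)) :
    ∀ x y t, deriv (fun τ => E x y τ) t + deriv (fun ξ => F ξ y t) x
      + deriv (fun η => G x η t) y = 0 := by
  obtain rfl : v = partialX p := funext₃ hv
  obtain rfl : w = partialX q := funext₃ hw
  obtain rfl : a = partialY p := funext₃ ha
  obtain rfl : b = partialY q := funext₃ hb
  obtain rfl : E = nlsEnergyDensity α V p q := funext₃ hE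
  obtain rfl : F = nlsFlux α partialX p q := funext₃ hF
  obtain rfl : G = nlsFlux α partialY p q := funext₃ hG
  have hp3 : ContDiff ℝ 3 (uncurry3 p) := by
    rw [show uncurry3 p = Complex.reCLM ∘ uncurry3 ψ from funext fun _ => hp _ _ _]
    exact Complex.reCLM.contDiff.comp hψ
  have hq3 : ContDiff ℝ 3 (uncurry3 q) := by
    rw [show uncurry3 q = Complex.imCLM ∘ uncurry3 ψ from funext fun _ => hq _ _ _]
    exact Complex.imCLM.contDiff.comp hψ
  intro x y t
  obtain ⟨hre, him⟩ := nls_re_im (hψ.of_le (by norm_num)) hp hq (hpde x y t)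
  exact nls_local_energy_conservation hp3 hq3 (hV _ x y) hre him

theorem stmt19 (α : ℝ) (V V' : ℝ → ℝ → ℝ → ℝ)
    (hV : ∀ (ξ x y : ℝ), HasDerivAt (fun ζ => V ζ x y) (V' ξ x y) ξ)
    (hV' : ∀ x y : ℝ, Continuous fun ξ => V' ξ x y)
    (ψ : ℝ → ℝ → ℝ → ℂ)
    (hpde : ∀ x y t,
      Complex.I * deriv (fun τ => ψ x y τ) t
        + (α : ℂ) * (deriv (fun ξ => deriv (fun ξ' => ψ ξ' y t) ξ) x
          + deriv (fun η => deriv (fun η' => ψ x η' t) η) y)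
        + (V' (Complex.normSq (ψ x y t)) x y : ℂ) * ψ x y t = 0)
    (p q v w a b : ℝ → ℝ → ℝ → ℝ)
    (hp : ∀ x y t, p x y t = (ψ x y t).re) (hq : ∀ x y t, q x y t = (ψ x y t).im)
    (hv : ∀ x y t, v x y t = deriv (fun ξ => p ξ y t) x)
    (hw : ∀ x y t, w x y t = deriv (fun ξ => q ξ y t) x)
    (ha : ∀ x y t, a x y t = deriv (fun η => p x η t) y)
    (hb : ∀ x y t, b x y t = deriv (fun η => q x η t) y)
    (hψ : ContDiff ℝ 3 fun pt : ℝ × ℝ × ℝ => ψ pt.1 pt.2.1 pt.2.2)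
    (E F G : ℝ → ℝ → ℝ → ℝ)
    (hE : ∀ x y t, E x y t = (1/2) * V (p x y t ^ 2 + q x y t ^ 2) x y
        + (α/2) * (p x y t * deriv (fun ξ => v ξ y t) x
          + q x y t * deriv (fun ξ => w ξ y t) x
          + p x y t * deriv (fun η => a x η t) y
          + q x y t * deriv (fun η => b x η t) y))
    (hF : ∀ x y t, F x y t = (α/2) * (-(p x y t) * deriv (fun τ => v x y τ) t
        - q x y t * deriv (fun τ => w x y τ) t
        + v x y t * deriv (fun τ => p x y τ) t
        + w x y t * deriv (fun τ => q x y τ) t))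
    (hG : ∀ x y t, G x y t = (α/2) * (-(p x y t) * deriv (fun τ => a x y τ) t
        - q x y t * deriv (fun τ => b x y τ) t
        + a x y t * deriv (fun τ => p x y τ) t
        + b x y t * deriv (fun τ => q x y τ) t)) :
    ∀ x y t, deriv (fun τ => E x y τ) t + deriv (fun ξ => F ξ y t) x
      + deriv (fun η => G x η t) y = 0 :=
  stmt19_general α V V' hV ψ hpde p q v w a b hp hq hv hw ha hb hψ E F G hE hF hG
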